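/- Let X and Y be jointly Gaussian, mean-zero random variables with variances σ_X and σ_Y, and let H_k(·;σ) denote the Hermite polynomial of degree k with variance parameter σ. Then E[H_k(X;σ_X) H_ℓ(Y;σ_Y)] = δ_{kℓ} k! (E[XY])^k. -/

import Mathlib

open MeasureTheory ProbabilityTheory

/-- The Hermite polynomial `H_k(x; σ)` of degree `k` with variance parameter `σ`,
i.e. the coefficients in `exp (t x - σ t² / 2) = ∑ₖ t^k H_k(x;σ) / k!`. -/
noncomputable def hermiteVar (k : ℕ) (x σ : ℝ) : ℝ :=
  ∑ j ∈ Finset.range (k / 2 + 1),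
    (Nat.factorial k : ℝ) / ((Nat.factorial j : ℝ) * (Nat.factorial (k - 2 * j) : ℝ)) *
      (-σ / 2) ^ j * x ^ (k - 2 * j)

namespace HermAux

open Polynomial Filter Real

noncomputable def φ (x : ℝ) : ℝ := gaussianPDFReal 0 1 x

lemma φ_def (x : ℝ) : φ x = (Real.sqrt (2*π))⁻¹ * Real.exp (-(x^2/2)) := by
  rw [φ, gaussianPDFReal]
  norm_num
  exact Or.inl (by ring)

lemma φ_nonneg (x : ℝ) : 0 ≤ φ x := gaussianPDFReal_nonneg 0 1 x

lemma measurable_φ : Measurable φ := measurable_gaussianPDFReal 0 1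

lemma integrable_pow_mul_φ (n : ℕ) :
    Integrable (fun x : ℝ => x ^ n * φ x) := by
  have hint : Integrable (fun x : ℝ => ((n.factorial : ℝ) * Real.exp 1 * (Real.sqrt (2*π))⁻¹) * Real.exp (-(1/4) * x^2)) :=
    (integrable_exp_neg_mul_sq (by norm_num)).const_mul _
  refine hint.mono' ?_ ?_
  · exact ((measurable_id.pow_const n).mul measurable_φ).aestronglyMeasurable
  · filter_upwards with x
    rw [Real.norm_eq_abs, abs_mul, abs_of_nonneg (φ_nonneg x), abs_pow, φ_def]
    have h1 : |x| ^ n ≤ (n.factorial : ℝ) * Real.exp |x| := by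
      have := Real.pow_div_factorial_le_exp (x := |x|) (abs_nonneg x) n
      rw [div_le_iff₀ (by positivity)] at this
      linarith [this]
    have h2 : Real.exp |x| ≤ Real.exp 1 * Real.exp (x^2/4) := by
      rw [← Real.exp_add]
      apply Real.exp_le_exp.2
      nlinarith [sq_nonneg (|x| - 2), sq_abs x]
    have h3 : |x|^n * ((Real.sqrt (2*π))⁻¹ * Real.exp (-(x^2/2)))
        ≤ (n.factorial : ℝ) * Real.exp 1 * Real.exp (x^2/4) * ((Real.sqrt (2*π))⁻¹ * Real.exp (-(x^2/2))) := by
      apply mul_le_mul_of_nonneg_right _ (by positivity)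
      calc |x|^n ≤ (n.factorial : ℝ) * Real.exp |x| := h1
        _ ≤ (n.factorial : ℝ) * (Real.exp 1 * Real.exp (x^2/4)) := by
            apply mul_le_mul_of_nonneg_left h2 (by positivity)
        _ = (n.factorial : ℝ) * Real.exp 1 * Real.exp (x^2/4) := by ring
    calc |x|^n * ((Real.sqrt (2*π))⁻¹ * Real.exp (-(x^2/2))) ≤ _ := h3
      _ = (n.factorial : ℝ) * Real.exp 1 * (Real.sqrt (2*π))⁻¹ * (Real.exp (x^2/4) * Real.exp (-(x^2/2))) := by ring
      _ = (n.factorial : ℝ) * Real.exp 1 * (Real.sqrt (2*π))⁻¹ * Real.exp (-(1/4) * x^2) := by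
          rw [← Real.exp_add]; ring_nf

lemma integral_gaussianReal01 (f : ℝ → ℝ) :
    ∫ x, f x ∂(gaussianReal 0 1) = ∫ x, φ x * f x := by
  rw [gaussianReal_of_var_ne_zero 0 one_ne_zero]
  have h : gaussianPDF 0 1 = fun x => ((gaussianPDFReal 0 1 x).toNNReal : ENNReal) := by
    ext x; rfl
  rw [h, integral_withDensity_eq_integral_smul (measurable_gaussianPDFReal 0 1).real_toNNReal f]
  congr 1 with x
  simp [NNReal.smul_def, Real.coe_toNNReal _ (φ_nonneg x), φ]
  exact Or.inl (gaussianPDFReal_nonneg 0 1 x)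

lemma integrable_gaussianReal01_iff (f : ℝ → ℝ) (hf : Measurable f) :
    Integrable f (gaussianReal 0 1) ↔ Integrable (fun x => φ x * f x) := by
  rw [gaussianReal_of_var_ne_zero 0 one_ne_zero,
    integrable_withDensity_iff (measurable_gaussianPDF 0 1) (by simp [gaussianPDF])]
  have hcong : (fun x => f x * (gaussianPDF 0 1 x).toReal) = fun x => φ x * f x := by
    ext x
    show f x * (ENNReal.ofReal (gaussianPDFReal 0 1 x)).toReal = _
    rw [ENNReal.toReal_ofReal (gaussianPDFReal_nonneg 0 1 x), mul_comm]
    rfl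
  rw [hcong]

lemma integrable_pow_gaussian (n : ℕ) :
    Integrable (fun x : ℝ => x ^ n) (gaussianReal 0 1) := by
  rw [integrable_gaussianReal01_iff (fun x => x ^ n) (by fun_prop)]
  exact (integrable_pow_mul_φ n).congr (by filter_upwards with x; ring_nf)

lemma hasDerivAt_φ (x : ℝ) : HasDerivAt φ (-x * φ x) x := by
  have hx : HasDerivAt (fun x : ℝ => -(x^2/2)) (-x) x := by
    exact (((hasDerivAt_pow 2 x).div_const 2).neg).congr_deriv (by norm_num)
  have h := (hx.exp).const_mul ((Real.sqrt (2*π))⁻¹)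
  have hfun : (fun x : ℝ => (Real.sqrt (2*π))⁻¹ * Real.exp (-(x^2/2))) = φ := by
    ext y; rw [φ_def]
  rw [hfun] at h
  refine h.congr_deriv ?_
  rw [φ_def]; ring

lemma tendsto_pow_mul_φ_atTop (n : ℕ) :
    Tendsto (fun x : ℝ => x ^ n * φ x) atTop (nhds 0) := by
  have key : Tendsto (fun x : ℝ => x ^ n * Real.exp (-x)) atTop (nhds 0) :=
    Real.tendsto_pow_mul_exp_neg_atTop_nhds_zero n
  have h0 : Tendsto (fun x : ℝ => x ^ n * Real.exp (-(x^2/2))) atTop (nhds 0) := by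
    apply tendsto_of_tendsto_of_tendsto_of_le_of_le' tendsto_const_nhds key
    · filter_upwards [eventually_ge_atTop (0:ℝ)] with x hx
      positivity
    · filter_upwards [eventually_ge_atTop (2:ℝ)] with x hx
      apply mul_le_mul_of_nonneg_left _ (by positivity)
      apply Real.exp_le_exp.2
      nlinarith
  have := h0.const_mul ((Real.sqrt (2*π))⁻¹)
  rw [mul_zero] at this
  exact this.congr (fun x => by rw [φ_def]; ring)

lemma tendsto_pow_mul_φ_atBot (n : ℕ) :
    Tendsto (fun x : ℝ => x ^ n * φ x) atBot (nhds 0) := by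
  have hφe : ∀ x : ℝ, φ (-x) = φ x := by
    intro x; rw [φ_def, φ_def]; ring_nf
  have h1 : Tendsto (fun x : ℝ => (-1:ℝ)^n * (x ^ n * φ x)) atTop (nhds 0) := by
    have := (tendsto_pow_mul_φ_atTop n).const_mul ((-1:ℝ)^n)
    rwa [mul_zero] at this
  have h2 : Tendsto (fun x : ℝ => (-x) ^ n * φ (-x)) atTop (nhds 0) :=
    h1.congr (fun x => by rw [hφe, neg_pow]; ring)
  have := h2.comp tendsto_neg_atBot_atTop
  exact this.congr (fun x => by simp [Function.comp])

/-- moment recurrence: ∫ x^(n+1) dγ = n ∫ x^(n-1) dγ -/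
lemma moment_rec (n : ℕ) :
    ∫ x, x ^ (n+1) ∂(gaussianReal 0 1) = n * ∫ x, x ^ (n-1) ∂(gaussianReal 0 1) := by
  rw [integral_gaussianReal01, integral_gaussianReal01]
  have hderiv : ∀ x : ℝ, HasDerivAt (fun x => x ^ n * φ x)
      ((n : ℝ) * x^(n-1) * φ x - x^(n+1) * φ x) x := by
    intro x
    have := (hasDerivAt_pow n x).mul (hasDerivAt_φ x)
    refine this.congr_deriv ?_
    ring_nf
  have hint : Integrable (fun x : ℝ => (n : ℝ) * x^(n-1) * φ x - x^(n+1) * φ x) := by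
    apply Integrable.sub
    · simpa [mul_assoc] using (integrable_pow_mul_φ (n-1)).const_mul (n : ℝ)
    · exact integrable_pow_mul_φ (n+1)
  have := integral_of_hasDerivAt_of_tendsto hderiv hint
    (tendsto_pow_mul_φ_atBot n) (tendsto_pow_mul_φ_atTop n)
  rw [sub_zero] at this
  have h2 : ∫ x, ((n : ℝ) * x^(n-1) * φ x - x^(n+1) * φ x) =
      (∫ x, (n:ℝ) * x^(n-1) * φ x) - ∫ x, x^(n+1) * φ x := by
    apply integral_sub
    · simpa [mul_assoc] using (integrable_pow_mul_φ (n-1)).const_mul (n : ℝ)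
    · exact integrable_pow_mul_φ (n+1)
  rw [h2] at this
  have h3 : ∫ x, (n:ℝ) * x^(n-1) * φ x = (n:ℝ) * ∫ x, x^(n-1) * φ x := by
    rw [← integral_const_mul]; congr 1 with x; ring
  rw [h3] at this
  have h4 : (∫ x, φ x * x ^ (n+1)) = ∫ x, x ^ (n+1) * φ x := by congr 1 with x; ring
  have h5 : (∫ x, φ x * x ^ (n-1)) = ∫ x, x ^ (n-1) * φ x := by congr 1 with x; ring
  rw [h4, h5]; linarith

noncomputable def HP (σ : ℝ) : ℕ → Polynomial ℝ
  | 0 => 1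
  | 1 => X
  | (n+2) => X * HP σ (n+1) - C (σ * ((n:ℝ)+1)) * HP σ n

lemma X_mul_HP (σ : ℝ) (n : ℕ) :
    X * HP σ n = HP σ (n+1) + C (σ * (n:ℝ)) * HP σ (n-1) := by
  match n with
  | 0 => simp [HP]
  | (n+1) =>
    rw [show n+1+1 = n+2 from rfl, HP]
    push_cast
    ring

lemma HP_deriv (σ : ℝ) : ∀ n, derivative (HP σ n) = C (n:ℝ) * HP σ (n-1)
  | 0 => by simp [HP]
  | 1 => by simp [HP]
  | (n+2) => by
    have h := X_mul_HP σ n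
    rw [HP, derivative_sub, derivative_mul, derivative_X, derivative_mul, derivative_C,
      HP_deriv σ (n+1), HP_deriv σ n,
      show n+1-1 = n from rfl, show n+2-1 = n+1 from rfl]
    push_cast
    have key : X * (C ((n:ℝ)+1) * HP σ n)
        = C ((n:ℝ)+1) * HP σ (n+1) + C (((n:ℝ)+1) * (σ * (n:ℝ))) * HP σ (n-1) := by
      rw [mul_left_comm, h, mul_add, ← mul_assoc, ← C_mul]
    rw [key, show ((n:ℝ)+1) * (σ * (n:ℝ)) = (σ * ((n:ℝ)+1)) * (n:ℝ) by ring, C_mul]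
    have hC : (C ((n:ℝ)+2) : Polynomial ℝ) = C (n:ℝ) + 2 := by
      rw [C_add]; norm_num; exact map_ofNat C 2
    have hC1 : (C ((n:ℝ)+1) : Polynomial ℝ) = C (n:ℝ) + 1 := by
      rw [C_add, C_1]
    rw [hC, hC1]; ring

/-- uniform term -/
noncomputable def tt (σ x : ℝ) (k j : ℕ) : ℝ :=
  (if 2*j ≤ k then ((k.factorial:ℝ)/((j.factorial:ℝ)*(((k-2*j).factorial:ℝ)))) else 0)
    * (-σ/2)^j * x^(k-2*j)

lemma hermiteVar_eq_sum_tt (σ x : ℝ) (k : ℕ) :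
    hermiteVar k x σ = ∑ j ∈ Finset.range (k+1), tt σ x k j := by
  rw [hermiteVar]
  rw [← Finset.sum_subset (Finset.range_subset_range.2 (by omega : k/2+1 ≤ k+1))
    (fun j _ hj => ?_)]
  · apply Finset.sum_congr rfl
    intro j hj
    rw [Finset.mem_range] at hj
    have h2 : 2*j ≤ k := by omega
    rw [tt, if_pos h2]
  · rw [Finset.mem_range] at *
    have h2 : ¬ (2*j ≤ k) := by omega
    rw [tt, if_neg h2, zero_mul, zero_mul]

lemma tt_rec (σ x : ℝ) (k j : ℕ) :
    tt σ x (k+2) (j+1) = x * tt σ x (k+1) (j+1) - σ*((k:ℝ)+1) * tt σ x k j := by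
  rcases le_or_gt (2*j) k with h | h
  · rcases eq_or_lt_of_le h with heq | hlt
    · -- 2j = k
      have hk : k = 2*j := heq.symm
      subst hk
      have c1 : 2*(j+1) ≤ 2*j+2 := by omega
      have c2 : ¬ (2*(j+1) ≤ 2*j+1) := by omega
      have c3 : 2*j ≤ 2*j := le_refl _
      rw [tt, tt, tt, if_pos c1, if_neg c2, if_pos c3]
      have e1 : 2*j+2 - 2*(j+1) = 0 := by omega
      have e2 : 2*j - 2*j = 0 := by omega
      rw [e1, e2]
      simp only [pow_zero, Nat.factorial_zero, mul_one, zero_mul, mul_zero, sub_zero]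
      have f1 : ((2*j+2).factorial : ℝ) = ((2*j+2):ℕ) * (((2*j+1):ℕ)) * ((2*j).factorial:ℝ) := by
        rw [show 2*j+2 = (2*j+1)+1 from rfl, Nat.factorial_succ, Nat.factorial_succ]
        push_cast; ring
      have f2 : ((j+1).factorial : ℝ) = ((j:ℝ)+1) * (j.factorial:ℝ) := by
        rw [Nat.factorial_succ]; push_cast; ring
      rw [f1, f2, pow_succ]
      have hj : (j.factorial:ℝ) ≠ 0 := Nat.cast_ne_zero.2 (Nat.factorial_ne_zero j)
      field_simp
      push_cast
      ring
    · -- 2j < k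
      obtain ⟨m, rfl⟩ : ∃ m, k = 2*j + m + 1 := ⟨k - 2*j - 1, by omega⟩
      have c1 : 2*(j+1) ≤ 2*j+m+1+2 := by omega
      have c2 : 2*(j+1) ≤ 2*j+m+1+1 := by omega
      have c3 : 2*j ≤ 2*j+m+1 := by omega
      rw [tt, tt, tt, if_pos c1, if_pos c2, if_pos c3]
      have e1 : 2*j+m+1+2 - 2*(j+1) = m+1 := by omega
      have e2 : 2*j+m+1+1 - 2*(j+1) = m := by omega
      have e3 : 2*j+m+1 - 2*j = m+1 := by omega
      rw [e1, e2, e3]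
      have f1 : ∀ N : ℕ, ((N+1).factorial : ℝ) = ((N:ℝ)+1) * (N.factorial:ℝ) := by
        intro N; rw [Nat.factorial_succ]; push_cast; ring
      rw [show 2*j+m+1+2 = (2*j+m+2)+1 from rfl, f1, show 2*j+m+2 = (2*j+m+1)+1 from rfl, f1,
          show 2*j+m+1+1 = (2*j+m+1)+1 from rfl, f1, f1 j, f1 m, pow_succ, pow_succ]
      have hj : (j.factorial:ℝ) ≠ 0 := Nat.cast_ne_zero.2 (Nat.factorial_ne_zero j)
      have hmf : (m.factorial:ℝ) ≠ 0 := Nat.cast_ne_zero.2 (Nat.factorial_ne_zero m)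
      have hkf : ((2*j+m+1).factorial:ℝ) ≠ 0 := Nat.cast_ne_zero.2 (Nat.factorial_ne_zero _)
      have hj1 : (j:ℝ)+1 ≠ 0 := by positivity
      have hm1 : (m:ℝ)+1 ≠ 0 := by positivity
      push_cast
      field_simp
      ring
  · -- 2j > k : all zero
    have c1 : ¬ (2*(j+1) ≤ k+2) := by omega
    have c2 : ¬ (2*(j+1) ≤ k+1) := by omega
    have c3 : ¬ (2*j ≤ k) := by omega
    rw [tt, tt, tt, if_neg c1, if_neg c2, if_neg c3]
    simp

lemma HP_eval (σ x : ℝ) : ∀ k, (HP σ k).eval x = hermiteVar k x σ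
  | 0 => by
    rw [hermiteVar_eq_sum_tt]
    simp [HP, tt]
  | 1 => by
    rw [hermiteVar_eq_sum_tt]
    rw [Finset.sum_range_succ, Finset.sum_range_one]
    rw [tt, tt, if_pos (by omega : 2*0 ≤ 1), if_neg (by omega : ¬ 2*1 ≤ 1)]
    simp [HP]
  | (k+2) => by
    rw [HP, eval_sub, eval_mul, eval_mul, eval_X, eval_C,
      HP_eval σ x (k+1), HP_eval σ x k]
    rw [hermiteVar_eq_sum_tt, hermiteVar_eq_sum_tt, hermiteVar_eq_sum_tt]
    have step : ∀ j ∈ Finset.range (k+2), tt σ x (k+2) (j+1)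
        = x * tt σ x (k+1) (j+1) - σ*((k:ℝ)+1) * tt σ x k j :=
      fun j _ => tt_rec σ x k j
    have h0 : tt σ x (k+2) 0 = x * tt σ x (k+1) 0 := by
      rw [tt, tt, if_pos (by omega), if_pos (by omega)]
      have hne1 : ((k+2).factorial : ℝ) ≠ 0 := Nat.cast_ne_zero.2 (Nat.factorial_ne_zero _)
      have hne2 : ((k+1).factorial : ℝ) ≠ 0 := Nat.cast_ne_zero.2 (Nat.factorial_ne_zero _)
      simp only [Nat.mul_zero, Nat.sub_zero, pow_zero, mul_one, Nat.factorial_zero,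
        Nat.cast_one, one_mul]
      rw [div_self hne1, div_self hne2, pow_succ]
      ring
    have hz1 : tt σ x (k+1) (k+2) = 0 := by
      rw [tt, if_neg (by omega)]; simp
    have hz0 : tt σ x k (k+1) = 0 := by
      rw [tt, if_neg (by omega)]; simp
    rw [Finset.sum_range_succ' (fun j => tt σ x (k+2) j) (k+2),
        Finset.sum_congr rfl step, Finset.sum_sub_distrib, ← Finset.mul_sum, ← Finset.mul_sum, h0]
    have hA : ∑ j ∈ Finset.range (k+2), tt σ x (k+1) (j+1)
        = (∑ j ∈ Finset.range (k+2), tt σ x (k+1) j) - tt σ x (k+1) 0 := by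
      have h' := Finset.sum_range_succ' (fun j => tt σ x (k+1) j) (k+2)
      rw [Finset.sum_range_succ (fun j => tt σ x (k+1) j) (k+2), hz1, add_zero] at h'
      linarith [h']
    have hB : ∑ j ∈ Finset.range (k+2), tt σ x k j = ∑ j ∈ Finset.range (k+1), tt σ x k j := by
      rw [Finset.sum_range_succ, hz0, add_zero]
    rw [hA, hB]
    ring


lemma integrable_polyeval (P : Polynomial ℝ) :
    Integrable (fun x => P.eval x) (gaussianReal 0 1) := by
  induction P using Polynomial.induction_on' with
  | add p q hp hq =>
    simp only [eval_add]
    exact hp.add hq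
  | monomial n a =>
    simp only [eval_monomial]
    exact (integrable_pow_gaussian n).const_mul a

lemma integrable_X_mul_polyeval (P : Polynomial ℝ) :
    Integrable (fun x => x * P.eval x) (gaussianReal 0 1) :=
  (integrable_polyeval (X * P)).congr (Filter.Eventually.of_forall fun x => by simp)

lemma stein (P : Polynomial ℝ) :
    ∫ x, x * P.eval x ∂(gaussianReal 0 1)
      = ∫ x, (derivative P).eval x ∂(gaussianReal 0 1) := by
  induction P using Polynomial.induction_on' with
  | add p q hp hq =>
    simp only [eval_add, derivative_add, mul_add]
    rw [integral_add (integrable_X_mul_polyeval p) (integrable_X_mul_polyeval q),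
      integral_add (integrable_polyeval (derivative p)) (integrable_polyeval (derivative q)),
      hp, hq]
  | monomial n a =>
    have h1 : (fun x : ℝ => x * (monomial n a).eval x) = fun x : ℝ => a * x^(n+1) := by
      ext x; rw [eval_monomial]; ring
    have h2 : (fun x : ℝ => (derivative (monomial n a)).eval x)
        = fun x : ℝ => (a * n) * x^(n-1) := by
      ext x; rw [derivative_monomial, eval_monomial]
    rw [h1, h2, integral_const_mul, integral_const_mul, moment_rec n]
    ring

noncomputable def T (m n : ℕ) : ℝ :=
  ∫ x, (HP 1 m * HP 1 n).eval x ∂(gaussianReal 0 1)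

lemma T_comm (m n : ℕ) : T m n = T n m := by
  unfold T; rw [mul_comm]

lemma T_zero_zero : T 0 0 = 1 := by
  unfold T
  simp [HP]

lemma T_succ_left (m n : ℕ) : T (m+1) n = (n:ℝ) * T m (n-1) := by
  have hX : HP 1 (m+1) = X * HP 1 m - C ((m:ℝ)) * HP 1 (m-1) := by
    have h := X_mul_HP 1 m
    rw [one_mul] at h
    rw [h]; ring
  have hs := stein (HP 1 m * HP 1 n)
  rw [derivative_mul, HP_deriv, HP_deriv] at hs
  have e1 : (fun x : ℝ => (HP 1 (m+1) * HP 1 n).eval x)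
      = fun x : ℝ => x * (HP 1 m * HP 1 n).eval x
        - (m:ℝ) * (HP 1 (m-1) * HP 1 n).eval x := by
    ext x
    rw [hX]
    simp only [eval_mul, eval_sub, eval_X, eval_C]
    ring
  have e2 : (fun x : ℝ => (C ((m:ℝ)) * HP 1 (m-1) * HP 1 n
        + HP 1 m * (C ((n:ℝ)) * HP 1 (n-1))).eval x)
      = fun x : ℝ => (m:ℝ) * (HP 1 (m-1) * HP 1 n).eval x
        + (n:ℝ) * (HP 1 m * HP 1 (n-1)).eval x := by
    ext x
    simp only [eval_add, eval_mul, eval_C]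
    ring
  rw [e2] at hs
  unfold T
  rw [e1, integral_sub (integrable_X_mul_polyeval _)
      ((integrable_polyeval _).const_mul _), hs,
    integral_add ((integrable_polyeval _).const_mul _)
      ((integrable_polyeval _).const_mul _),
    integral_const_mul, integral_const_mul]
  ring

lemma T_eq : ∀ m n, T m n = if m = n then (m.factorial : ℝ) else 0 := by
  intro m
  induction m with
  | zero =>
    intro n
    match n with
    | 0 => simpa using T_zero_zero
    | (n+1) =>
      rw [T_comm, T_succ_left]
      simp
  | succ m ih =>
    intro n
    match n with
    | 0 =>
      rw [T_succ_left]
      simp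
    | (n+1) =>
      rw [T_succ_left, show n+1-1 = n from rfl, ih n]
      by_cases h : m = n
      · subst h
        rw [if_pos rfl, if_pos rfl, Nat.factorial_succ]
        push_cast
        ring
      · simp [h, fun h' : m+1 = n+1 => h (by omega)]

section DChunk
open Finset

lemma step_mul (c w : ℝ) : ∀ j : ℕ, (c*w) * (c^j * (HP 1 j).eval w)
    = c^(j+1) * (HP 1 (j+1)).eval w + c^2 * (j:ℝ) * (c^(j-1) * (HP 1 (j-1)).eval w)
  | 0 => by simp [HP]
  | (j+1) => by
    have hz : w * (HP 1 (j+1)).eval w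
        = (HP 1 (j+2)).eval w + ((j:ℝ)+1) * (HP 1 j).eval w := by
      have h := congrArg (Polynomial.eval w) (X_mul_HP 1 (j+1))
      simp only [Polynomial.eval_mul, Polynomial.eval_X, Polynomial.eval_add,
        Polynomial.eval_C, one_mul, show j+1-1 = j from rfl] at h
      push_cast at h
      linarith [h]
    have : (c*w) * (c^(j+1) * (HP 1 (j+1)).eval w)
        = c^(j+2) * (w * (HP 1 (j+1)).eval w) := by ring
    rw [this, hz]
    push_cast
    ring

lemma choose_id1 (k j : ℕ) :
    (((k+1).choose (j+1) : ℕ):ℝ) * ((j:ℝ)+1) = ((k:ℝ)+1) * ((k.choose j : ℕ):ℝ) := by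
  have h := Nat.add_one_mul_choose_eq k j
  have := congrArg (Nat.cast : ℕ → ℝ) h
  push_cast at this
  linarith

lemma choose_id2 (k j : ℕ) :
    (((k+1).choose j : ℕ):ℝ) * (((k+1-j : ℕ)):ℝ) = ((k:ℝ)+1) * ((k.choose j : ℕ):ℝ) := by
  have h1 : (k+1).choose j * (k+1-j) = (k+1).choose (j+1) * (j+1) :=
    (Nat.choose_succ_right_eq (k+1) j).symm
  have h2 := Nat.add_one_mul_choose_eq k j
  have := congrArg (Nat.cast : ℕ → ℝ) (h1.trans h2.symm)
  push_cast at this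
  linarith

lemma HP_addition (a b z₁ z₂ : ℝ) : ∀ k, (HP (a^2+b^2) k).eval (a*z₁+b*z₂)
    = ∑ j ∈ Finset.range (k+1), ((k.choose j : ℕ):ℝ)
        * (a^j * (HP 1 j).eval z₁) * (b^(k-j) * (HP 1 (k-j)).eval z₂)
  | 0 => by simp [HP]
  | 1 => by
    simp [HP, Finset.sum_range_succ]
    ring
  | (k+2) => by
    rw [HP, Polynomial.eval_sub, Polynomial.eval_mul, Polynomial.eval_mul, Polynomial.eval_X,
      Polynomial.eval_C, HP_addition a b z₁ z₂ (k+1), HP_addition a b z₁ z₂ k]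
    set u : ℕ → ℝ := fun j => a^j * (HP 1 j).eval z₁ with hu
    set v : ℕ → ℝ := fun i => b^i * (HP 1 i).eval z₂ with hv
    set A : ℝ := ∑ j ∈ Finset.range (k+2), (((k+1).choose j : ℕ):ℝ) * (u (j+1) * v (k+1-j)) with hA
    set B : ℝ := ∑ j ∈ Finset.range (k+2), (j:ℝ) * ((((k+1).choose j : ℕ)):ℝ) * (u (j-1) * v (k+1-j)) with hB
    set D : ℝ := ∑ j ∈ Finset.range (k+2), (((k+1).choose j : ℕ):ℝ) * (u j * v (k+2-j)) with hD
    set E : ℝ := ∑ j ∈ Finset.range (k+2), ((k+1-j : ℕ):ℝ) * (((k+1).choose j : ℕ):ℝ) * (u j * v (k-j)) with hE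
    set F : ℝ := ∑ j ∈ Finset.range (k+1), ((k.choose j : ℕ):ℝ) * (u j * v (k-j)) with hF
    have h1 : (a*z₁+b*z₂) * ∑ j ∈ Finset.range (k+2),
        (((k+1).choose j : ℕ):ℝ) * u j * v (k+1-j)
        = A + a^2 * B + D + b^2 * E := by
      rw [Finset.mul_sum, hA, hB, hD, hE, Finset.mul_sum, Finset.mul_sum,
        ← Finset.sum_add_distrib, ← Finset.sum_add_distrib, ← Finset.sum_add_distrib]
      apply Finset.sum_congr rfl
      intro j hj
      rw [Finset.mem_range] at hj
      have e1 : (k+1-j)+1 = k+2-j := by omega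
      have e2 : (k+1-j)-1 = k-j := by omega
      have expand : (a*z₁+b*z₂) * ((((k+1).choose j : ℕ):ℝ) * u j * v (k+1-j))
          = (((k+1).choose j : ℕ):ℝ) * (((a*z₁) * u j) * v (k+1-j))
            + (((k+1).choose j : ℕ):ℝ) * (u j * ((b*z₂) * v (k+1-j))) := by ring
      rw [expand, hu, hv]
      simp only
      rw [step_mul a z₁ j, step_mul b z₂ (k+1-j), e1, e2]
      push_cast
      ring
    have h2 : B = ((k:ℝ)+1) * F := by
      rw [hB, Finset.sum_range_succ']
      simp only [Nat.cast_zero, zero_mul]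
      rw [add_zero, hF, Finset.mul_sum]
      apply Finset.sum_congr rfl
      intro j hj
      have e : j+1-1 = j := rfl
      have e2 : k+1-(j+1) = k-j := by omega
      rw [e, e2]
      have := choose_id1 k j
      push_cast
      linear_combination (u j * v (k-j)) * this
    have h3 : E = ((k:ℝ)+1) * F := by
      rw [hE, Finset.sum_range_succ]
      have : ((k+1-(k+1) : ℕ):ℝ) = 0 := by norm_num
      rw [this, zero_mul, zero_mul, add_zero, hF, Finset.mul_sum]
      apply Finset.sum_congr rfl
      intro j hj
      have := choose_id2 k j
      linear_combination (u j * v (k-j)) * this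
    have h4 : A + D = ∑ j ∈ Finset.range (k+3),
        (((k+2).choose j : ℕ):ℝ) * u j * v (k+2-j) := by
      rw [Finset.sum_range_succ' (fun j => (((k+2).choose j : ℕ):ℝ) * u j * v (k+2-j)) (k+2)]
      have hpas : ∀ j ∈ Finset.range (k+2),
          (((k+2).choose (j+1) : ℕ):ℝ) * u (j+1) * v (k+2-(j+1))
          = (((k+1).choose j : ℕ):ℝ) * (u (j+1) * v (k+1-j))
            + (((k+1).choose (j+1) : ℕ):ℝ) * (u (j+1) * v (k+2-(j+1))) := by
        intro j hj
        have e : k+2-(j+1) = k+1-j := by omega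
        rw [e, Nat.choose_succ_succ (k+1) j]
        push_cast
        ring
      rw [Finset.sum_congr rfl hpas, Finset.sum_add_distrib]
      have h5 : (∑ j ∈ Finset.range (k+2), (((k+1).choose (j+1) : ℕ):ℝ) * (u (j+1) * v (k+2-(j+1))))
          + (((k+2).choose 0 : ℕ):ℝ) * u 0 * v (k+2-0)
          = D := by
        have h6 := Finset.sum_range_succ' (fun j => (((k+1).choose j : ℕ):ℝ) * (u j * v (k+2-j))) (k+2)
        rw [Finset.sum_range_succ (fun j => (((k+1).choose j : ℕ):ℝ) * (u j * v (k+2-j))) (k+2)] at h6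
        have hz : (((k+1).choose (k+2) : ℕ):ℝ) = 0 := by
          rw [Nat.choose_eq_zero_of_lt (by omega)]; norm_num
        rw [hz, zero_mul, add_zero] at h6
        rw [hD]
        simp only [Nat.choose_zero_right, Nat.cast_one, one_mul, Nat.sub_zero] at h6 ⊢
        linarith [h6]
      rw [hA]
      linarith [h5]
    calc (a*z₁+b*z₂) * (∑ j ∈ Finset.range (k+2), (((k+1).choose j : ℕ):ℝ) * u j * v (k+1-j))
          - (a^2+b^2) * ((k:ℝ)+1) * (∑ j ∈ Finset.range (k+1), ((k.choose j : ℕ):ℝ) * u j * v (k-j))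
        = (A + a^2 * B + D + b^2 * E) - (a^2+b^2) * ((k:ℝ)+1) * F := by
          rw [← h1]
          congr 1
          rw [hF]
          congr 1
          apply Finset.sum_congr rfl
          intro j hj
          ring
      _ = ∑ j ∈ Finset.range (k+3), (((k+2).choose j : ℕ):ℝ) * u j * v (k+2-j) := by
          rw [h2, h3, ← h4]; ring

end DChunk

section EChunk

lemma main_thm {Ω : Type*} [MeasurableSpace Ω] (μ : Measure Ω) [IsProbabilityMeasure μ]
    (Z₁ Z₂ : Ω → ℝ) (hm₁ : Measurable Z₁) (hm₂ : Measurable Z₂)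
    (hZ₁ : Measure.map Z₁ μ = gaussianReal 0 1)
    (hZ₂ : Measure.map Z₂ μ = gaussianReal 0 1)
    (hindep : ProbabilityTheory.IndepFun Z₁ Z₂ μ)
    (a b c d : ℝ) (k l : ℕ) :
    ∫ ω, hermiteVar k (a * Z₁ ω + b * Z₂ ω) (a ^ 2 + b ^ 2) *
          hermiteVar l (c * Z₁ ω + d * Z₂ ω) (c ^ 2 + d ^ 2) ∂μ =
      if k = l then (Nat.factorial k : ℝ) * (a * c + b * d) ^ k else 0 := by
  classical
  set γ : Measure ℝ := gaussianReal 0 1 with hγ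
  -- the function on ℝ²
  set G : ℝ × ℝ → ℝ := fun p => (HP (a^2+b^2) k).eval (a*p.1+b*p.2)
      * (HP (c^2+d^2) l).eval (c*p.1+d*p.2) with hG
  have hmap : Measure.map (fun ω => (Z₁ ω, Z₂ ω)) μ = γ.prod γ := by
    rw [(ProbabilityTheory.indepFun_iff_map_prod_eq_prod_map_map
      hm₁.aemeasurable hm₂.aemeasurable).1 hindep, hZ₁, hZ₂]
  have hGcont : Continuous G := by
    apply Continuous.mul
    · exact ((HP (a^2+b^2) k).continuous_aeval).comp
        (((continuous_fst.const_smul a).add (continuous_snd.const_smul b)))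
    · exact ((HP (c^2+d^2) l).continuous_aeval).comp
        (((continuous_fst.const_smul c).add (continuous_snd.const_smul d)))
  have step1 : ∫ ω, hermiteVar k (a * Z₁ ω + b * Z₂ ω) (a ^ 2 + b ^ 2) *
          hermiteVar l (c * Z₁ ω + d * Z₂ ω) (c ^ 2 + d ^ 2) ∂μ
      = ∫ p, G p ∂(γ.prod γ) := by
    rw [← hmap, integral_map (hm₁.prodMk hm₂).aemeasurable hGcont.aestronglyMeasurable]
    congr 1 with ω
    rw [hG]
    simp only
    rw [HP_eval, HP_eval]
  rw [step1]
  -- expand G via the addition formula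
  have hGexp : ∀ p : ℝ × ℝ, G p = ∑ j ∈ Finset.range (k+1), ∑ i ∈ Finset.range (l+1),
      (((k.choose j : ℕ):ℝ) * ((l.choose i : ℕ):ℝ) * (a^j * b^(k-j) * c^i * d^(l-i)))
        * ((HP 1 j * HP 1 i).eval p.1 * (HP 1 (k-j) * HP 1 (l-i)).eval p.2) := by
    intro p
    rw [hG]
    simp only
    rw [HP_addition a b p.1 p.2 k, HP_addition c d p.1 p.2 l, Finset.sum_mul_sum]
    apply Finset.sum_congr rfl
    intro j _
    apply Finset.sum_congr rfl
    intro i _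
    simp only [Polynomial.eval_mul]
    ring
  rw [integral_congr_ae (Filter.Eventually.of_forall hGexp)]
  have hint : ∀ (P Q : Polynomial ℝ) (K : ℝ), Integrable
      (fun p : ℝ × ℝ => K * (P.eval p.1 * Q.eval p.2)) (γ.prod γ) :=fun P Q K =>
    (((integrable_polyeval P).mul_prod (integrable_polyeval Q)).const_mul K)
  rw [integral_finset_sum _ (fun j _ => integrable_finset_sum _ (fun i _ => hint _ _ _))]
  have step2 : ∀ j ∈ Finset.range (k+1),
      (∫ p, ∑ i ∈ Finset.range (l+1),
      (((k.choose j : ℕ):ℝ) * ((l.choose i : ℕ):ℝ) * (a^j * b^(k-j) * c^i * d^(l-i)))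
        * ((HP 1 j * HP 1 i).eval p.1 * (HP 1 (k-j) * HP 1 (l-i)).eval p.2) ∂(γ.prod γ))
      = ∑ i ∈ Finset.range (l+1),
      (((k.choose j : ℕ):ℝ) * ((l.choose i : ℕ):ℝ) * (a^j * b^(k-j) * c^i * d^(l-i)))
        * (T j i * T (k-j) (l-i)) := by
    intro j _
    rw [integral_finset_sum _ (fun i _ => hint _ _ _)]
    apply Finset.sum_congr rfl
    intro i _
    rw [integral_const_mul, integral_prod_mul (fun x => (HP 1 j * HP 1 i).eval x)
      (fun y => (HP 1 (k-j) * HP 1 (l-i)).eval y)]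
    rfl
  rw [Finset.sum_congr rfl step2]
  -- now evaluate using T_eq
  by_cases hkl : k = l
  · subst hkl
    rw [if_pos rfl]
    have inner : ∀ j ∈ Finset.range (k+1),
        (∑ i ∈ Finset.range (k+1),
        (((k.choose j : ℕ):ℝ) * ((k.choose i : ℕ):ℝ) * (a^j * b^(k-j) * c^i * d^(k-i)))
          * (T j i * T (k-j) (k-i)))
        = ((k.choose j : ℕ):ℝ) * ((a*c)^j * (b*d)^(k-j)) * (k.factorial : ℝ) := by
      intro j hj
      rw [Finset.mem_range] at hj
      rw [Finset.sum_eq_single j]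
      · rw [T_eq, T_eq, if_pos rfl, if_pos rfl]
        have hfac : ((k.choose j : ℕ):ℝ) * ((j.factorial : ℕ):ℝ) * (((k-j).factorial : ℕ):ℝ)
            = (k.factorial : ℝ) := by
          have := Nat.choose_mul_factorial_mul_factorial (by omega : j ≤ k)
          exact_mod_cast congrArg (Nat.cast : ℕ → ℝ) this
        rw [mul_pow, mul_pow]
        linear_combination (((k.choose j : ℕ):ℝ) * (a^j * b^(k-j) * c^j * d^(k-j))) * hfac
      · intro i hi hij
        rw [Finset.mem_range] at hi
        rcases Nat.lt_or_ge i j with h | h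
        · rw [T_eq j i, if_neg (by omega)]
          ring
        · have : i ≠ j := hij
          rw [T_eq j i, if_neg (by omega)]
          ring
      · intro h
        exact absurd (Finset.mem_range.2 (by omega)) h
    rw [Finset.sum_congr rfl inner]
    rw [← Finset.sum_mul]
    rw [show ∑ j ∈ Finset.range (k+1), ((k.choose j : ℕ):ℝ) * ((a*c)^j * (b*d)^(k-j))
        = (a*c + b*d)^k from ?_]
    · ring
    · rw [add_pow]
      apply Finset.sum_congr rfl
      intro j _
      ring
  · rw [if_neg hkl]
    apply Finset.sum_eq_zero
    intro j hj
    apply Finset.sum_eq_zero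
    intro i hi
    rw [Finset.mem_range] at hj hi
    by_cases hji : j = i
    · have : ¬ (k - j = l - i) := by omega
      rw [T_eq (k-j) (l-i), if_neg this]
      ring
    · rw [T_eq j i, if_neg hji]
      ring

end EChunk

end HermAux

/-- Orthogonality of Hermite polynomials of jointly Gaussian mean-zero variables.
The pair `(X, Y) = (a Z₁ + b Z₂, c Z₁ + d Z₂)` with `Z₁, Z₂` independent standard
Gaussians is a general mean-zero jointly Gaussian vector, with `Var X = a² + b²`,
`Var Y = c² + d²` and `E[XY] = a c + b d`. -/
theorem stmt_16 {Ω : Type*} [MeasurableSpace Ω] (μ : Measure Ω) [IsProbabilityMeasure μ]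
    (Z₁ Z₂ : Ω → ℝ) (hm₁ : Measurable Z₁) (hm₂ : Measurable Z₂)
    (hZ₁ : Measure.map Z₁ μ = gaussianReal 0 1)
    (hZ₂ : Measure.map Z₂ μ = gaussianReal 0 1)
    (hindep : IndepFun Z₁ Z₂ μ)
    (a b c d : ℝ) (k l : ℕ) :
    ∫ ω, hermiteVar k (a * Z₁ ω + b * Z₂ ω) (a ^ 2 + b ^ 2) *
          hermiteVar l (c * Z₁ ω + d * Z₂ ω) (c ^ 2 + d ^ 2) ∂μ =
      if k = l then (Nat.factorial k : ℝ) * (a * c + b * d) ^ k else 0 := by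
  exact HermAux.main_thm μ Z₁ Z₂ hm₁ hm₂ hZ₁ hZ₂ hindep a b c d k l
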